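/- arXiv:1605.02291 — 3 statements merged into one kernel-verified Lean document; each statement's English description precedes it below -/
import Mathlib

section
/- Let n ≥ 1 and let C be any clique cover of the path P_{2n+1} consisting of exactly one singleton clique and n cliques that are edges of the path. Then the graph C{P_{2n+1}} obtained by the clique cover construction has the same domination polynomial as H_{2n+1}, namely D(C{P_{2n+1}}, x) = (x³ + 3x² + x)(x⁴ + 4x³ + 6x² + 2x)^n. -/
open Polynomial

variable {V W : Type*}

/-- `S` is a dominating set of `G`. -/
def Dominates (G : SimpleGraph V) (S : Finset V) : Prop :=
  ∀ v, v ∉ S → ∃ u ∈ S, G.Adj u v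

open Classical in
/-- The domination polynomial of a finite simple graph. -/
noncomputable def domPoly [Fintype V] (G : SimpleGraph V) : Polynomial ℤ :=
  ∑ S : Finset V, if Dominates G S then (X : Polynomial ℤ) ^ S.card else 0

/-- Stevanović's clique cover construction `C{G}`. -/
def cliqueCoverConstruction (G : SimpleGraph V) {k : ℕ} (C : Fin k → Finset V) :
    SimpleGraph (V ⊕ Fin k × Fin 2) where
  Adj x y :=
    match x, y with
    | Sum.inl a, Sum.inl b => G.Adj a b
    | Sum.inl a, Sum.inr (i, _) => a ∈ C i
    | Sum.inr (i, _), Sum.inl a => a ∈ C i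
    | Sum.inr _, Sum.inr _ => False
  symm := by
    constructor
    rintro (a | ⟨i, t⟩) (b | ⟨j, s⟩) h
    · exact G.adj_symm h
    · exact h
    · exact h
    · exact h.elim
  loopless := by
    constructor
    rintro (a | ⟨i, t⟩) h
    · exact G.irrefl h
    · exact h

/-- clique cover of the odd path -/
def oddCover (n : ℕ) : Fin (n + 1) → Finset (Fin (2 * n + 1)) :=
  fun i =>
    if i.val = 0 then {⟨0, by omega⟩}
    else {⟨2 * i.val - 1, by have := i.isLt; omega⟩, ⟨2 * i.val, by have := i.isLt; omega⟩}

/-- The graph `H_{2n+1}`. -/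
def H2n1 (n : ℕ) : SimpleGraph (Fin (2 * n + 1) ⊕ Fin (n + 1) × Fin 2) :=
  cliqueCoverConstruction (SimpleGraph.pathGraph (2 * n + 1)) (oddCover n)

/-! For any clique cover `C` of `G`, the domination polynomial of `C{G}` factorises over the
blocks `C i ∪ {twins of C i}`: a set dominates `C{G}` iff in every block it contains a vertex of
`C i` or both twins, and the only subsets of a block that fail this are `∅` and the two twin
singletons. Hence `D(C{G}, x) = ∏ᵢ ((x + 1)^(|C i| + 2) - (2x + 1))` depends only on the clique
sizes, and one singleton with `n` edges gives `(x³ + 3x² + x)(x⁴ + 4x³ + 6x² + 2x)ⁿ`, both for `C`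
and for the cover defining `H_{2n+1}`. -/

open Finset

section BlockDecomposition

variable {α ι : Type*} {B : ι → Finset α}

theorem disjoint_of_existsUnique_mem (hB : ∀ a, ∃! i, a ∈ B i) {i j : ι} (hij : i ≠ j) :
    Disjoint (B i) (B j) :=
  disjoint_left.2 fun a hai haj => hij ((hB a).unique hai haj)

variable [DecidableEq α] [Fintype ι]

theorem biUnion_inter_of_existsUnique_mem (hB : ∀ a, ∃! i, a ∈ B i) (S : Finset α) :
    univ.biUnion (fun i => S ∩ B i) = S := by
  ext a
  simp only [mem_biUnion, mem_univ, true_and, mem_inter]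
  obtain ⟨i, hi, -⟩ := hB a
  exact ⟨fun ⟨_, ha, _⟩ => ha, fun ha => ⟨i, ha, hi⟩⟩

theorem sum_card_inter_of_existsUnique_mem (hB : ∀ a, ∃! i, a ∈ B i) (S : Finset α) :
    ∑ i, #(S ∩ B i) = #S := by
  conv_rhs => rw [← biUnion_inter_of_existsUnique_mem hB S]
  refine (card_biUnion fun i _ j _ hij => ?_).symm
  exact (disjoint_of_existsUnique_mem hB hij).mono inter_subset_right inter_subset_right

theorem sum_prod_inter_eq_prod_sum_powerset [Fintype α] [DecidableEq ι] {R : Type*}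
    [CommSemiring R] (hB : ∀ a, ∃! i, a ∈ B i) (f : ι → Finset α → R) :
    ∑ S : Finset α, ∏ i, f i (S ∩ B i) = ∏ i, ∑ A ∈ (B i).powerset, f i A := by
  rw [prod_univ_sum]
  refine sum_nbij' (fun S i => S ∩ B i) (fun p => univ.biUnion p) ?_ ?_ ?_ ?_ ?_
  · intro S _
    simp [Fintype.mem_piFinset]
  · simp
  · intro S _
    exact biUnion_inter_of_existsUnique_mem hB S
  · intro p hp
    simp only [Fintype.mem_piFinset, mem_powerset] at hp
    funext i
    ext a
    simp only [mem_inter, mem_biUnion, mem_univ, true_and]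
    refine ⟨fun ⟨⟨j, hj⟩, hai⟩ => ?_, fun ha => ⟨⟨i, ha⟩, hp i ha⟩⟩
    rwa [(hB a).unique hai (hp j hj)]
  · simp

end BlockDecomposition

theorem sum_powerset_filter_not_ssubset_pow {α R : Type*} [DecidableEq α] [CommRing R] (x : R)
    {s u : Finset α} (hu : u ⊆ s) :
    ∑ A ∈ s.powerset with ¬A ⊂ u, x ^ #A = (x + 1) ^ #s - ((x + 1) ^ #u - x ^ #u) := by
  have hpow (t : Finset α) : ∑ A ∈ t.powerset, x ^ #A = (x + 1) ^ #t := by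
    simpa using sum_pow_mul_eq_add_pow x 1 t
  have hssubsets : {A ∈ s.powerset | A ⊂ u} = u.ssubsets := by
    ext A
    simpa using fun h : A ⊂ u => h.subset.trans hu
  rw [← hpow, ← sum_filter_add_sum_filter_not s.powerset (· ⊂ u), hssubsets, ssubsets,
    sum_erase_eq_sub (mem_powerset_self u), hpow]
  ring

section CliqueCover

variable {k : ℕ}

def cliqueCoverBlock (C : Fin k → Finset V) (i : Fin k) : Finset (V ⊕ Fin k × Fin 2) :=
  (C i).disjSum ({i} ×ˢ univ)

def cliqueCoverTwins (i : Fin k) : Finset (V ⊕ Fin k × Fin 2) :=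
  (∅ : Finset V).disjSum ({i} ×ˢ univ)

variable {C : Fin k → Finset V}

theorem existsUnique_mem_cliqueCoverBlock (hC : ∀ v, ∃! i, v ∈ C i) (x : V ⊕ Fin k × Fin 2) :
    ∃! i, x ∈ cliqueCoverBlock C i := by
  rcases x with v | ⟨j, t⟩
  · simpa [cliqueCoverBlock] using hC v
  · simp [cliqueCoverBlock]

theorem cliqueCoverTwins_subset_block (C : Fin k → Finset V) (i : Fin k) :
    cliqueCoverTwins i ⊆ cliqueCoverBlock C i :=
  disjSum_mono (empty_subset _) subset_rfl

theorem card_cliqueCoverBlock (C : Fin k → Finset V) (i : Fin k) :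
    #(cliqueCoverBlock C i) = #(C i) + 2 := by
  simp [cliqueCoverBlock]

theorem card_cliqueCoverTwins (i : Fin k) : #(cliqueCoverTwins (V := V) i) = 2 := by
  simp [cliqueCoverTwins]

variable [DecidableEq V]

theorem inter_cliqueCoverBlock_ssubset_twins_iff (S : Finset (V ⊕ Fin k × Fin 2)) (i : Fin k) :
    S ∩ cliqueCoverBlock C i ⊂ cliqueCoverTwins i ↔
      (∀ v ∈ C i, Sum.inl v ∉ S) ∧ ∃ t, Sum.inr (i, t) ∉ S := by
  simp only [ssubset_def, subset_iff, cliqueCoverBlock, cliqueCoverTwins, mem_inter, Sum.forall,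
    inl_mem_disjSum, inr_mem_disjSum, mem_product, mem_singleton, mem_univ, Prod.forall]
  grind

theorem dominates_cliqueCoverConstruction_iff {G : SimpleGraph V} (hC : ∀ v, ∃! i, v ∈ C i)
    (hclique : ∀ i, G.IsClique (C i : Set V)) (S : Finset (V ⊕ Fin k × Fin 2)) :
    Dominates (cliqueCoverConstruction G C) S ↔
      ∀ i, ¬S ∩ cliqueCoverBlock C i ⊂ cliqueCoverTwins i := by
  simp only [inter_cliqueCoverBlock_ssubset_twins_iff, not_and, not_exists, not_not]
  constructor
  · intro hS i hnone t
    by_contra ht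
    obtain ⟨v | _, hu, hadj⟩ := hS _ ht
    · exact hnone v hadj hu
    · exact hadj.elim
  · rintro h (v | ⟨i, t⟩) hx
    · obtain ⟨i, hvi, -⟩ := hC v
      by_cases hw : ∃ w ∈ C i, Sum.inl w ∈ S
      · obtain ⟨w, hw, hwS⟩ := hw
        exact ⟨.inl w, hwS, hclique i hw hvi (by rintro rfl; exact hx hwS)⟩
      · push Not at hw
        exact ⟨.inr (i, 0), h i hw 0, hvi⟩
    · by_contra! hnd
      exact hx (h i (fun v hv hvS => hnd _ hvS hv) t)

theorem domPoly_cliqueCoverConstruction [Fintype V] {G : SimpleGraph V}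
    (hC : ∀ v, ∃! i, v ∈ C i) (hclique : ∀ i, G.IsClique (C i : Set V)) :
    domPoly (cliqueCoverConstruction G C) = ∏ i, ((X + 1) ^ (#(C i) + 2) - (2 * X + 1)) := by
  have hB := existsUnique_mem_cliqueCoverBlock hC
  calc domPoly (cliqueCoverConstruction G C)
      = ∑ S, ∏ i, if ¬S ∩ cliqueCoverBlock C i ⊂ cliqueCoverTwins i then
          (X : ℤ[X]) ^ #(S ∩ cliqueCoverBlock C i) else 0 := by
        unfold domPoly
        refine sum_congr rfl fun S _ => ?_
        simp only [Fintype.prod_ite_zero, prod_pow_eq_pow_sum,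
          sum_card_inter_of_existsUnique_mem hB, dominates_cliqueCoverConstruction_iff hC hclique]
    _ = ∏ i, ∑ A ∈ (cliqueCoverBlock C i).powerset,
          if ¬A ⊂ cliqueCoverTwins i then (X : ℤ[X]) ^ #A else 0 :=
        sum_prod_inter_eq_prod_sum_powerset hB fun i A =>
          if ¬A ⊂ cliqueCoverTwins i then (X : ℤ[X]) ^ #A else 0
    _ = ∏ i, ((X + 1) ^ (#(C i) + 2) - (2 * X + 1)) := by
        refine prod_congr rfl fun i _ => ?_
        rw [← sum_filter,
          sum_powerset_filter_not_ssubset_pow _ (cliqueCoverTwins_subset_block C i),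
          card_cliqueCoverBlock, card_cliqueCoverTwins]
        ring

end CliqueCover

theorem domPoly_cliqueCoverConstruction_of_singleton_of_edges [Fintype V]
    [DecidableEq V] {G : SimpleGraph V} {n : ℕ} {C : Fin (n + 1) → Finset V}
    (hC : ∀ v, ∃! i, v ∈ C i) {i₀ : Fin (n + 1)} (hsingle : #(C i₀) = 1)
    (hedges : ∀ i, i ≠ i₀ → ∃ u v, G.Adj u v ∧ C i = {u, v}) :
    domPoly (cliqueCoverConstruction G C) =
      (X ^ 3 + 3 * X ^ 2 + X) * (X ^ 4 + 4 * X ^ 3 + 6 * X ^ 2 + 2 * X) ^ n := by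
  have hclique (i : Fin (n + 1)) : G.IsClique (C i : Set V) := by
    rcases eq_or_ne i i₀ with rfl | hi
    · obtain ⟨v, hv⟩ := card_eq_one.1 hsingle
      simp [hv]
    · obtain ⟨u, v, huv, hCi⟩ := hedges i hi
      simpa [hCi, SimpleGraph.isClique_pair] using fun _ => huv
  have hedge (i : Fin (n + 1)) (hi : i ∈ ({i₀}ᶜ : Finset _)) :
      ((X + 1) ^ (#(C i) + 2) - (2 * X + 1) : ℤ[X]) = X ^ 4 + 4 * X ^ 3 + 6 * X ^ 2 + 2 * X := by
    obtain ⟨u, v, huv, hCi⟩ := hedges i (by simpa using hi)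
    rw [hCi, card_pair huv.ne]
    ring
  rw [domPoly_cliqueCoverConstruction hC hclique, Fintype.prod_eq_mul_prod_compl i₀, hsingle,
    prod_congr rfl hedge, prod_const, card_compl, card_singleton, Fintype.card_fin,
    Nat.add_sub_cancel]
  ring

theorem mem_oddCover {n : ℕ} {i : Fin (n + 1)} {v : Fin (2 * n + 1)} :
    v ∈ oddCover n i ↔ (v : ℕ) + 1 = 2 * i ∨ (v : ℕ) = 2 * i := by
  unfold oddCover
  split_ifs <;> simp only [mem_insert, mem_singleton, Fin.ext_iff] <;> omega

theorem existsUnique_mem_oddCover (n : ℕ) (v : Fin (2 * n + 1)) : ∃! i, v ∈ oddCover n i := by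
  refine ⟨⟨(v + 1) / 2, by omega⟩, mem_oddCover.2 (by dsimp only; omega), fun j hj => ?_⟩
  replace hj := mem_oddCover.1 hj
  ext
  dsimp only
  omega

theorem card_oddCover_zero (n : ℕ) : #(oddCover n 0) = 1 := by
  simp [oddCover]

theorem oddCover_eq_pair_of_ne_zero (n : ℕ) {i : Fin (n + 1)} (hi : i ≠ 0) :
    ∃ u v, (SimpleGraph.pathGraph (2 * n + 1)).Adj u v ∧ oddCover n i = {u, v} := by
  have hi' : (i : ℕ) ≠ 0 := fun h => hi (Fin.ext h)
  refine ⟨_, _, ?_, if_neg hi'⟩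
  simp only [SimpleGraph.pathGraph_adj]
  omega

theorem domPoly_cliqueCoverConstruction_oddPath_general (n : ℕ)
    (C : Fin (n + 1) → Finset (Fin (2 * n + 1)))
    (hpart : ∀ v, ∃! i, v ∈ C i)
    (i₀ : Fin (n + 1)) (hsingle : (C i₀).card = 1)
    (hedges : ∀ i, i ≠ i₀ →
      ∃ u v, (SimpleGraph.pathGraph (2 * n + 1)).Adj u v ∧ C i = {u, v}) :
    domPoly (cliqueCoverConstruction (SimpleGraph.pathGraph (2 * n + 1)) C) =
        domPoly (H2n1 n) ∧
      domPoly (cliqueCoverConstruction (SimpleGraph.pathGraph (2 * n + 1)) C) =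
        (X ^ 3 + 3 * X ^ 2 + X) * (X ^ 4 + 4 * X ^ 3 + 6 * X ^ 2 + 2 * X) ^ n := by
  have hC := domPoly_cliqueCoverConstruction_of_singleton_of_edges hpart hsingle hedges
  have hH : domPoly (H2n1 n) = _ :=
    domPoly_cliqueCoverConstruction_of_singleton_of_edges (existsUnique_mem_oddCover n)
      (card_oddCover_zero n) fun _ => oddCover_eq_pair_of_ne_zero n
  exact ⟨hC.trans hH.symm, hC⟩

/-- Any clique cover of `P_{2n+1}` consisting of exactly one singleton
clique and `n` cliques that are edges of the path yields, via the clique cover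
construction, a graph with the same domination polynomial as `H_{2n+1}`. -/
theorem domPoly_cliqueCoverConstruction_oddPath (n : ℕ) (hn : 1 ≤ n)
    (C : Fin (n + 1) → Finset (Fin (2 * n + 1)))
    (hpart : ∀ v, ∃! i, v ∈ C i)
    (i₀ : Fin (n + 1)) (hsingle : (C i₀).card = 1)
    (hedges : ∀ i, i ≠ i₀ →
      ∃ u v, (SimpleGraph.pathGraph (2 * n + 1)).Adj u v ∧ C i = {u, v}) :
    domPoly (cliqueCoverConstruction (SimpleGraph.pathGraph (2 * n + 1)) C) =
        domPoly (H2n1 n) ∧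
      domPoly (cliqueCoverConstruction (SimpleGraph.pathGraph (2 * n + 1)) C) =
        (X ^ 3 + 3 * X ^ 2 + X) * (X ^ 4 + 4 * X ^ 3 + 6 * X ^ 2 + 2 * X) ^ n :=
  domPoly_cliqueCoverConstruction_oddPath_general n C hpart i₀ hsingle hedges
end

section
/- Let k ≥ 2, n > k, and let G be a finite simple graph of order m ≥ 1. Then the corona G ∘ S_{k−1,n−k} and the disjoint union of m copies of S_{k,n−k} have the same domination polynomial, i.e., D(G ∘ S_{k−1,n−k}, x) = (D(S_{k,n−k}, x))^m. -/
open Polynomial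

variable {V W : Type*}

/-- The join of two graphs on disjoint vertex sets. -/
def graphJoin (G : SimpleGraph V) (H : SimpleGraph W) : SimpleGraph (V ⊕ W) where
  Adj x y :=
    match x, y with
    | Sum.inl a, Sum.inl b => G.Adj a b
    | Sum.inr a, Sum.inr b => H.Adj a b
    | _, _ => True
  symm := by
    constructor
    rintro (a | a) (b | b) h
    · exact G.adj_symm h
    · trivial
    · trivial
    · exact H.adj_symm h
  loopless := by
    constructor
    rintro (a | a) h
    · exact G.irrefl h
    · exact H.irrefl h

/-- The corona `G ∘ H`. -/
def corona (G : SimpleGraph V) (H : SimpleGraph W) : SimpleGraph (V ⊕ V × W) where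
  Adj x y :=
    match x, y with
    | Sum.inl a, Sum.inl b => G.Adj a b
    | Sum.inl a, Sum.inr (b, _) => a = b
    | Sum.inr (b, _), Sum.inl a => a = b
    | Sum.inr (a, w), Sum.inr (b, w') => a = b ∧ H.Adj w w'
  symm := by
    constructor
    rintro (a | ⟨a, w⟩) (b | ⟨b, w'⟩) h
    · exact G.adj_symm h
    · exact h
    · exact h
    · exact ⟨h.1.symm, H.adj_symm h.2⟩
  loopless := by
    constructor
    rintro (a | ⟨a, w⟩) h
    · exact G.irrefl h
    · exact H.irrefl h.2

/-- The `k`-star `S_{k,s}`: the join of `K_k` with the edgeless graph on `s` vertices. -/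
def kstar (k s : ℕ) : SimpleGraph (Fin k ⊕ Fin s) :=
  graphJoin (⊤ : SimpleGraph (Fin k)) (⊥ : SimpleGraph (Fin s))

/-!
A set dominates the corona `G ∘ H` (with `H` nonempty) exactly when, in every fibre
`{v} ∪ H_v`, it dominates the cone `K_1 ∨ H`. Vertices of `H_v` have all their neighbours in
the fibre; the apex `v` may be dominated from outside, but if `v` is not in the set, any vertex
of `H_v` is either in the set or dominated by a vertex of `H_v` in it, and both are adjacent
to `v`. Hence `D(G ∘ H) = D(K_1 ∨ H)^m`, and the cone over `S_{k−1,n−k}` is `S_{k,n−k}`.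
-/

open Finset

section

variable {X α : Type*}

section Isomorphism

variable {G : SimpleGraph V} {G' : SimpleGraph W}

theorem Dominates.map (e : G ≃g G') {S : Finset V} (hS : Dominates G S) :
    Dominates G' (S.map e.toEquiv.toEmbedding) := by
  intro w hw
  obtain ⟨u, hu, hadj⟩ := hS (e.symm w) fun h => hw (mem_map_equiv.mpr h)
  exact ⟨e u, mem_map_of_mem _ hu, by simpa using e.map_adj_iff.mpr hadj⟩

theorem dominates_map_iff (e : G ≃g G') (S : Finset V) :
    Dominates G' (S.map e.toEquiv.toEmbedding) ↔ Dominates G S := by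
  refine ⟨fun h => ?_, Dominates.map e⟩
  simpa [Finset.map_map] using h.map e.symm

theorem domPoly_eq_of_iso [Fintype V] [Fintype W] (e : G ≃g G') : domPoly G = domPoly G' := by
  unfold domPoly
  refine Fintype.sum_equiv e.toEquiv.finsetCongr _ _ fun S => ?_
  rw [Equiv.finsetCongr_apply, card_map, dominates_map_iff]

end Isomorphism

section Join

variable {V' W' : Type*} (G : SimpleGraph V) (H : SimpleGraph W)

@[simp] theorem graphJoin_adj_inl_inl (a b : V) :
    (graphJoin G H).Adj (.inl a) (.inl b) ↔ G.Adj a b :=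
  Iff.rfl

@[simp] theorem graphJoin_adj_inl_inr (a : V) (b : W) : (graphJoin G H).Adj (.inl a) (.inr b) :=
  trivial

@[simp] theorem graphJoin_adj_inr_inl (a : W) (b : V) : (graphJoin G H).Adj (.inr a) (.inl b) :=
  trivial

@[simp] theorem graphJoin_adj_inr_inr (a b : W) :
    (graphJoin G H).Adj (.inr a) (.inr b) ↔ H.Adj a b :=
  Iff.rfl

theorem graphJoin_top_top : graphJoin (⊤ : SimpleGraph V) (⊤ : SimpleGraph W) = ⊤ := by
  ext (a | a) (b | b) <;> simp

def graphJoinAssoc (K : SimpleGraph X) :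
    graphJoin (graphJoin G H) K ≃g graphJoin G (graphJoin H K) where
  toEquiv := Equiv.sumAssoc V W X
  map_rel_iff' := by rintro ((a | a) | a) ((b | b) | b) <;> simp

variable {G H} {G' : SimpleGraph V'} {H' : SimpleGraph W'}

def SimpleGraph.Iso.graphJoin (e : G ≃g G') (f : H ≃g H') :
    _root_.graphJoin G H ≃g _root_.graphJoin G' H' where
  toEquiv := Equiv.sumCongr e.toEquiv f.toEquiv
  map_rel_iff' := by rintro (a | a) (b | b) <;> simp [e.map_adj_iff, f.map_adj_iff]

end Join

def cone (H : SimpleGraph W) : SimpleGraph (Unit ⊕ W) :=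
  graphJoin ⊤ H

theorem domPoly_cone_kstar (k s : ℕ) : domPoly (cone (kstar k s)) = domPoly (kstar (k + 1) s) :=
  calc domPoly (cone (kstar k s))
    _ = domPoly (graphJoin (graphJoin (⊤ : SimpleGraph Unit) (⊤ : SimpleGraph (Fin k)))
          (⊥ : SimpleGraph (Fin s))) := (domPoly_eq_of_iso (graphJoinAssoc _ _ _)).symm
    _ = domPoly (kstar (k + 1) s) := by
      rw [graphJoin_top_top]
      refine domPoly_eq_of_iso ((SimpleGraph.Iso.completeGraph ?_).graphJoin .refl)
      exact Fintype.equivOfCardEq (by simp [add_comm])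

section Fibres

variable [Fintype V] [Fintype X]

open Classical in
noncomputable def fibreEquiv (e : V × X ≃ α) : Finset α ≃ (V → Finset X) where
  toFun S v := {x | e (v, x) ∈ S}
  invFun f := (univ.filter fun p : V × X => p.2 ∈ f p.1).map e.toEmbedding
  left_inv S := by ext a; simp [mem_map_equiv]
  right_inv f := by ext v x; simp

@[simp] theorem mem_fibreEquiv (e : V × X ≃ α) (S : Finset α) (v : V) (x : X) :
    x ∈ fibreEquiv e S v ↔ e (v, x) ∈ S := by
  simp [fibreEquiv]

theorem card_eq_sum_card_fibreEquiv [Fintype α] (e : V × X ≃ α) (S : Finset α) :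
    #S = ∑ v, #(fibreEquiv e S v) := by
  classical
  calc #S = ∑ a, if a ∈ S then 1 else 0 := by simp
    _ = ∑ v, ∑ x, if e (v, x) ∈ S then 1 else 0 := by
      rw [← Fintype.sum_prod_type']
      exact (Fintype.sum_equiv e _ _ fun _ => rfl).symm
    _ = ∑ v, #(fibreEquiv e S v) := by
      refine Fintype.sum_congr _ _ fun v => ?_
      simp only [fibreEquiv, Equiv.coe_fn_mk, card_filter]

theorem domPoly_eq_pow_of_dominates_iff [Fintype α] (e : V × X ≃ α) {G : SimpleGraph α}
    {H : SimpleGraph X} (h : ∀ S, Dominates G S ↔ ∀ v, Dominates H (fibreEquiv e S v)) :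
    domPoly G = domPoly H ^ Fintype.card V := by
  classical
  unfold domPoly
  rw [← card_univ, ← prod_const, prod_univ_sum, Fintype.piFinset_univ]
  refine Fintype.sum_equiv (fibreEquiv e) _ _ fun S => ?_
  rw [Fintype.prod_ite_zero, prod_pow_eq_pow_sum, ← card_eq_sum_card_fibreEquiv]
  exact if_congr (h S) rfl rfl

end Fibres

section Corona

variable (G : SimpleGraph V) (H : SimpleGraph W)

@[simp] theorem corona_adj_inl_inl (a b : V) : (corona G H).Adj (.inl a) (.inl b) ↔ G.Adj a b :=
  Iff.rfl

@[simp] theorem corona_adj_inl_inr (a b : V) (w : W) :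
    (corona G H).Adj (.inl a) (.inr (b, w)) ↔ a = b :=
  Iff.rfl

@[simp] theorem corona_adj_inr_inl (a b : V) (w : W) :
    (corona G H).Adj (.inr (b, w)) (.inl a) ↔ a = b :=
  Iff.rfl

@[simp] theorem corona_adj_inr_inr (a b : V) (w w' : W) :
    (corona G H).Adj (.inr (a, w)) (.inr (b, w')) ↔ a = b ∧ H.Adj w w' :=
  Iff.rfl

def coronaEquiv (V W : Type*) : V × (Unit ⊕ W) ≃ V ⊕ V × W :=
  (Equiv.prodSumDistrib V Unit W).trans (Equiv.sumCongr (Equiv.prodPUnit V) (Equiv.refl _))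

@[simp] theorem coronaEquiv_inl (v : V) (u : Unit) : coronaEquiv V W (v, .inl u) = .inl v :=
  rfl

@[simp] theorem coronaEquiv_inr (v : V) (w : W) : coronaEquiv V W (v, .inr w) = .inr (v, w) :=
  rfl

variable [Fintype V] [Fintype W]

theorem dominates_corona_iff [Nonempty W] (S : Finset (V ⊕ V × W)) :
    Dominates (corona G H) S ↔ ∀ v, Dominates (cone H) (fibreEquiv (coronaEquiv V W) S v) := by
  constructor
  · intro hS v
    rintro (_ | w) hx <;> simp only [mem_fibreEquiv, coronaEquiv_inl, coronaEquiv_inr] at hx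
    · obtain ⟨w⟩ := ‹Nonempty W›
      by_cases hw : .inr (v, w) ∈ S
      · exact ⟨.inr w, by simpa using hw, by simp [cone]⟩
      obtain ⟨u | ⟨v', w'⟩, hu, hadj⟩ := hS _ hw
      · obtain rfl : u = v := by simpa using hadj
        exact absurd hu hx
      · obtain ⟨rfl, -⟩ : v' = v ∧ _ := by simpa [eq_comm] using hadj
        exact ⟨.inr w', by simpa using hu, by simp [cone]⟩
    · obtain ⟨u | ⟨v', w'⟩, hu, hadj⟩ := hS _ hx
      · obtain rfl : u = v := by simpa using hadj
        exact ⟨.inl (), by simpa using hu, by simp [cone]⟩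
      · obtain ⟨rfl, hadj⟩ : v' = v ∧ H.Adj w' w := by simpa using hadj
        exact ⟨.inr w', by simpa using hu, by simpa [cone] using hadj⟩
  · intro hS
    rintro (v | ⟨v, w⟩) hx
    · obtain ⟨_ | w, hw, -⟩ := hS v (.inl ()) (by simpa using hx)
      · exact absurd (by simpa using hw) hx
      · exact ⟨.inr (v, w), by simpa using hw, by simp⟩
    · obtain ⟨_ | w', hw', hadj⟩ := hS v (.inr w) (by simpa using hx)
      · exact ⟨.inl v, by simpa using hw', by simp⟩
      · exact ⟨.inr (v, w'), by simpa using hw', by simpa [cone] using hadj⟩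

theorem domPoly_corona [Nonempty W] :
    domPoly (corona G H) = domPoly (cone H) ^ Fintype.card V :=
  domPoly_eq_pow_of_dominates_iff (coronaEquiv V W) (dominates_corona_iff G H)

end Corona

end

theorem domPoly_corona_kstar_general {V : Type*} [Fintype V] (G : SimpleGraph V)
    (k n : ℕ) (hk : 2 ≤ k) :
    domPoly (corona G (kstar (k - 1) (n - k))) =
      domPoly (kstar k (n - k)) ^ Fintype.card V := by
  obtain ⟨j, rfl⟩ : ∃ j, k = j + 1 := ⟨k - 1, by omega⟩
  have : Nonempty (Fin j ⊕ Fin (n - (j + 1))) := ⟨.inl ⟨0, by omega⟩⟩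
  rw [Nat.add_sub_cancel, domPoly_corona, domPoly_cone_kstar]

/-- `G ∘ S_{k−1,n−k}` and the disjoint union of `|V(G)|` copies of
`S_{k,n−k}` have the same domination polynomial. -/
theorem domPoly_corona_kstar {V : Type*} [Fintype V] (G : SimpleGraph V)
    (k n : ℕ) (hk : 2 ≤ k) (hn : k < n) (hm : 1 ≤ Fintype.card V) :
    domPoly (corona G (kstar (k - 1) (n - k))) =
      domPoly (kstar k (n - k)) ^ Fintype.card V :=
  domPoly_corona_kstar_general G k n hk
end

section
/- For every natural number n ≥ 1, the domination polynomial of the friendship graph satisfies D(F_n, x) = (2x + x²)^n + x(1 + x)^{2n}. -/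
open Polynomial

variable {V W : Type*}

/-- `n` disjoint copies of `K₂`. -/
def nK2 (n : ℕ) : SimpleGraph (Fin n × Fin 2) where
  Adj x y := x.1 = y.1 ∧ x.2 ≠ y.2
  symm := by constructor; rintro ⟨i, a⟩ ⟨j, b⟩ ⟨h1, h2⟩; exact ⟨h1.symm, h2.symm⟩
  loopless := by constructor; rintro ⟨i, a⟩ ⟨_, h⟩; exact h rfl

/-- The friendship graph `F_n = K₁ + nK₂`. -/
def friendship (n : ℕ) : SimpleGraph (Fin 1 ⊕ Fin n × Fin 2) :=
  graphJoin (⊤ : SimpleGraph (Fin 1)) (nK2 n)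

/-!
A set `A ⊔ B` dominates the join `G + H` of graphs on nonempty vertex sets `V`, `W` iff both
parts are nonempty, or `B = ∅` and `A` dominates `G`, or `A = ∅` and `B` dominates `H`. Hence
`D(G + H) = D(K_V) D(K_W) + D(G) + D(H)`, where `D(K_m) = (1 + x)^m - 1` counts the nonempty
sets. Domination in a disjoint union `⊥ □ H` of copies of `H` is checked copy by copy, so
`D(nK₂) = D(K₂)^n = (2x + x²)^n`, and for `F_n = K₁ + nK₂` this gives
`D(F_n) = x((1 + x)^{2n} - 1) + x + (2x + x²)^n`.
-/

open Finset

open Classical in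
noncomputable def domTerm (G : SimpleGraph V) (S : Finset V) : Polynomial ℤ :=
  if Dominates G S then X ^ S.card else 0

theorem domPoly_eq_sum_domTerm [Fintype V] (G : SimpleGraph V) :
    domPoly G = ∑ S, domTerm G S := rfl

theorem not_dominates_empty [Nonempty V] (G : SimpleGraph V) : ¬ Dominates G ∅ := fun h =>
  let ⟨v⟩ := ‹Nonempty V›
  let ⟨_, hu, _⟩ := h v (notMem_empty v)
  notMem_empty _ hu

theorem Dominates.nonempty [Nonempty V] {G : SimpleGraph V} {S : Finset V}
    (h : Dominates G S) : S.Nonempty :=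
  nonempty_iff_ne_empty.2 fun hS => not_dominates_empty G (hS ▸ h)

theorem dominates_top_iff [Nonempty V] {S : Finset V} :
    Dominates (⊤ : SimpleGraph V) S ↔ S.Nonempty :=
  ⟨Dominates.nonempty, fun ⟨u, hu⟩ v hv =>
    ⟨u, hu, (SimpleGraph.top_adj u v).2 (ne_of_mem_of_not_mem hu hv)⟩⟩

theorem domTerm_top [Nonempty V] (S : Finset V) :
    domTerm (⊤ : SimpleGraph V) S = if S.Nonempty then X ^ S.card else 0 := by
  simp only [domTerm, dominates_top_iff]

theorem sum_X_pow_card [Fintype V] :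
    ∑ S : Finset V, (X : Polynomial ℤ) ^ S.card = (1 + X) ^ Fintype.card V := by
  simpa [add_comm] using Fintype.sum_pow_mul_eq_add_pow V (X : Polynomial ℤ) 1

theorem domPoly_top [Fintype V] [Nonempty V] :
    domPoly (⊤ : SimpleGraph V) = (1 + X) ^ Fintype.card V - 1 := by
  classical
  have hterm (S : Finset V) : domTerm ⊤ S = X ^ S.card - if S = ∅ then 1 else 0 := by
    rcases S.eq_empty_or_nonempty with rfl | hS
    · simp [domTerm_top]
    · simp [domTerm_top, hS, hS.ne_empty]
  rw [domPoly_eq_sum_domTerm, sum_congr rfl fun S _ => hterm S, sum_sub_distrib, sum_X_pow_card,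
    sum_ite_eq', if_pos (mem_univ _)]

section graphJoin

variable {G : SimpleGraph V} {H : SimpleGraph W}

theorem dominates_graphJoin_of_nonempty {A : Finset V} {B : Finset W} (hA : A.Nonempty)
    (hB : B.Nonempty) : Dominates (graphJoin G H) (A.disjSum B) := by
  obtain ⟨a, ha⟩ := hA
  obtain ⟨b, hb⟩ := hB
  rintro (v | w) _
  · exact ⟨Sum.inr b, inr_mem_disjSum.2 hb, trivial⟩
  · exact ⟨Sum.inl a, inl_mem_disjSum.2 ha, trivial⟩

theorem dominates_graphJoin_disjSum_empty_iff [Nonempty V] {A : Finset V} :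
    Dominates (graphJoin G H) (A.disjSum (∅ : Finset W)) ↔ Dominates G A := by
  constructor
  · intro h v hv
    obtain ⟨(a | b), hu, hadj⟩ := h (Sum.inl v) (by simpa using hv)
    · exact ⟨a, by simpa using hu, hadj⟩
    · simp at hu
  · intro h
    obtain ⟨a, ha⟩ := h.nonempty
    rintro (v | w) hv
    · obtain ⟨u, hu, hadj⟩ := h v (by simpa using hv)
      exact ⟨Sum.inl u, inl_mem_disjSum.2 hu, hadj⟩
    · exact ⟨Sum.inl a, inl_mem_disjSum.2 ha, trivial⟩

theorem dominates_graphJoin_empty_disjSum_iff [Nonempty W] {B : Finset W} :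
    Dominates (graphJoin G H) ((∅ : Finset V).disjSum B) ↔ Dominates H B := by
  constructor
  · intro h w hw
    obtain ⟨(a | b), hu, hadj⟩ := h (Sum.inr w) (by simpa using hw)
    · simp at hu
    · exact ⟨b, by simpa using hu, hadj⟩
  · intro h
    obtain ⟨b, hb⟩ := h.nonempty
    rintro (v | w) hw
    · exact ⟨Sum.inr b, inr_mem_disjSum.2 hb, trivial⟩
    · obtain ⟨u, hu, hadj⟩ := h w (by simpa using hw)
      exact ⟨Sum.inr u, inr_mem_disjSum.2 hu, hadj⟩

theorem domTerm_graphJoin [Nonempty V] [Nonempty W] [DecidableEq V] [DecidableEq W]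
    (A : Finset V) (B : Finset W) :
    domTerm (graphJoin G H) (A.disjSum B) =
      domTerm ⊤ A * domTerm ⊤ B + (if B = ∅ then domTerm G A else 0) +
        if A = ∅ then domTerm H B else 0 := by
  simp only [domTerm_top]
  rcases A.eq_empty_or_nonempty with rfl | hA <;> rcases B.eq_empty_or_nonempty with rfl | hB
  · simp [domTerm, not_dominates_empty]
  · rw [domTerm, dominates_graphJoin_empty_disjSum_iff]
    simp [domTerm, hB, hB.ne_empty]
  · rw [domTerm, dominates_graphJoin_disjSum_empty_iff]
    simp [domTerm, hA, hA.ne_empty]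
  · simp [domTerm, dominates_graphJoin_of_nonempty hA hB, hA, hB, hA.ne_empty, hB.ne_empty,
      pow_add]

theorem domPoly_graphJoin [Fintype V] [Fintype W] [Nonempty V] [Nonempty W] :
    domPoly (graphJoin G H) = domPoly (⊤ : SimpleGraph V) * domPoly (⊤ : SimpleGraph W) +
      domPoly G + domPoly H := by
  classical
  simp only [domPoly_eq_sum_domTerm]
  rw [← Finset.sumEquiv.symm.toEquiv.sum_comp, Fintype.sum_prod_type]
  simp only [RelIso.coe_fn_toEquiv, sumEquiv_symm_apply, domTerm_graphJoin, sum_add_distrib,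
    sum_mul_sum]
  rw [sum_comm (s := univ) (f := fun A B => if A = ∅ then domTerm H B else 0)]
  simp only [sum_ite_eq', mem_univ, if_true]

end graphJoin

section boxProd

variable {ι β : Type*} [Fintype ι] [Fintype β] [DecidableEq ι] [DecidableEq β]

def finsetProdEquivPi : Finset (ι × β) ≃ (ι → Finset β) where
  toFun S i := {b | (i, b) ∈ S}
  invFun f := {p | p.2 ∈ f p.1}
  left_inv S := by ext ⟨i, b⟩; simp
  right_inv f := by ext i b; simp

@[simp]
theorem mem_finsetProdEquivPi {S : Finset (ι × β)} {i : ι} {b : β} :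
    b ∈ finsetProdEquivPi S i ↔ (i, b) ∈ S := by
  simp [finsetProdEquivPi]

theorem card_eq_sum_card_finsetProdEquivPi (S : Finset (ι × β)) :
    S.card = ∑ i, (finsetProdEquivPi S i).card := by
  calc S.card = ∑ p : ι × β, if p ∈ S then 1 else 0 := by rw [← card_filter, filter_univ_mem]
    _ = ∑ i, (finsetProdEquivPi S i).card := by
      simp only [Fintype.sum_prod_type, finsetProdEquivPi, Equiv.coe_fn_mk, card_filter]

theorem dominates_bot_boxProd_iff {H : SimpleGraph β} {S : Finset (ι × β)} :
    Dominates ((⊥ : SimpleGraph ι) □ H) S ↔ ∀ i, Dominates H (finsetProdEquivPi S i) := by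
  constructor
  · intro h i b hb
    obtain ⟨⟨j, a⟩, hu, hadj⟩ := h (i, b) (by simpa using hb)
    obtain ⟨hab, rfl⟩ : H.Adj a b ∧ j = i := by simpa using hadj
    exact ⟨a, by simpa using hu, hab⟩
  · rintro h ⟨i, b⟩ hv
    obtain ⟨a, ha, hab⟩ := h i b (by simpa using hv)
    exact ⟨(i, a), by simpa using ha, by simpa using hab⟩

theorem domTerm_bot_boxProd (H : SimpleGraph β) (S : Finset (ι × β)) :
    domTerm ((⊥ : SimpleGraph ι) □ H) S = ∏ i, domTerm H (finsetProdEquivPi S i) := by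
  classical
  unfold domTerm
  rw [Fintype.prod_ite_zero, dominates_bot_boxProd_iff, prod_pow_eq_pow_sum,
    ← card_eq_sum_card_finsetProdEquivPi]
  congr

end boxProd

theorem domPoly_bot_boxProd {ι β : Type*} [Fintype ι] [Fintype β] (H : SimpleGraph β) :
    domPoly ((⊥ : SimpleGraph ι) □ H) = domPoly H ^ Fintype.card ι := by
  classical
  calc ∑ S, domTerm (⊥ □ H) S = ∑ f : ι → Finset β, ∏ i, domTerm H (f i) := by
        simp only [domTerm_bot_boxProd]
        exact finsetProdEquivPi.sum_comp fun f => ∏ i, domTerm H (f i)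
    _ = ∏ _i : ι, ∑ t, domTerm H t := (Fintype.prod_sum _).symm
    _ = domPoly H ^ Fintype.card ι := by rw [prod_const, card_univ, domPoly_eq_sum_domTerm]

theorem nK2_eq_bot_boxProd_top (n : ℕ) : nK2 n = (⊥ : SimpleGraph (Fin n)) □ ⊤ := by
  ext x y
  simp [nK2, and_comm]

/-- The domination polynomial of the friendship graph `F_n`. -/
theorem domPoly_friendship (n : ℕ) (hn : 1 ≤ n) :
    domPoly (friendship n) = (2 * X + X ^ 2) ^ n + X * (1 + X) ^ (2 * n) := by
  have : Nonempty (Fin n × Fin 2) := ⟨(⟨0, hn⟩, 0)⟩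
  rw [friendship, domPoly_graphJoin, nK2_eq_bot_boxProd_top, domPoly_bot_boxProd]
  simp only [domPoly_top, Fintype.card_fin, Fintype.card_prod]
  ring
end
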